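/- arXiv:2510.10146 — 3 statements merged into one kernel-verified Lean document; each statement's English description precedes it below -/
import Mathlib

section
/- Let (a_n)_{n≥1} satisfy 0 < α ≤ a_n ≤ M, and for each n let f_n : ℝ → ℝ be C¹ and convex with |f_n(t)| ≤ β_n(1+t²) for all t, where (β_n) ∈ s. For x = (x_n) ∈ s define g_n(x) := a_n x_n + f_n'(x_n). Then the sequence (g_n(x))_{n≥1} is bounded: sup_n |g_n(x)| < ∞; in particular it is a tempered sequence, i.e. it belongs to the dual space t = ∪_{k∈ℕ} { y : sup_n |y_n| n^{−k} < ∞ }. -/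
/-!
A convex differentiable function lies above its tangent lines, so its derivative at `t` is
squeezed between the difference quotients over `[t - 1, t]` and `[t, t + 1]`. The growth bound
`|fₙ s| ≤ βₙ (1 + s²)` on `[t - 1, t + 1]` therefore gives `|fₙ' t| ≤ 2 βₙ (1 + (|t| + 1)²)`.
As `a`, `x` and `β` are bounded, so is `aₙ xₙ + fₙ'(xₙ)`.
-/

/-- The space `s` of rapidly decreasing sequences (indexed so that `x n` represents the
`(n+1)`-st term of the paper's sequence `(x_n)_{n ≥ 1}`). -/
def InS (x : ℕ → ℝ) : Prop :=
  ∀ k : ℕ, ∃ C : ℝ, ∀ n : ℕ, |x n| * ((n : ℝ) + 1) ^ k ≤ C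

open Set

lemma InS.exists_abs_le {x : ℕ → ℝ} (hx : InS x) : ∃ C, ∀ n, |x n| ≤ C := by
  obtain ⟨C, hC⟩ := hx 0
  exact ⟨C, fun n => by simpa using hC n⟩

lemma ConvexOn.abs_deriv_le {f : ℝ → ℝ} {t B : ℝ} (hf : ConvexOn ℝ univ f)
    (hd : DifferentiableAt ℝ f t) (hB : ∀ s, |s - t| ≤ 1 → |f s| ≤ B) :
    |deriv f t| ≤ 2 * B := by
  have hright : deriv f t ≤ f (t + 1) - f t := by
    simpa [slope_def_field] using hf.deriv_le_slope (mem_univ t) (mem_univ (t + 1)) (by linarith) hd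
  have hleft : f t - f (t - 1) ≤ deriv f t := by
    simpa [slope_def_field] using hf.slope_le_deriv (mem_univ (t - 1)) (mem_univ t) (by linarith) hd
  have h₀ := abs_le.mp (hB t (by simp))
  have hup := abs_le.mp (hB (t + 1) (by simp))
  have hlow := abs_le.mp (hB (t - 1) (by simp))
  rw [abs_le]
  constructor <;> linarith

lemma ConvexOn.abs_deriv_le_of_abs_le_mul_one_add_sq {f : ℝ → ℝ} {b : ℝ}
    (hf : ConvexOn ℝ univ f) (hd : Differentiable ℝ f) (hg : ∀ t, |f t| ≤ b * (1 + t ^ 2))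
    (t : ℝ) : |deriv f t| ≤ 2 * (b * (1 + (|t| + 1) ^ 2)) := by
  have hb : 0 ≤ b := by simpa using (abs_nonneg (f 0)).trans (hg 0)
  refine hf.abs_deriv_le (hd t) fun s hs => (hg s).trans ?_
  have hst : |s| ≤ |t| + 1 := by linarith [abs_sub_abs_le_abs_sub s t]
  have : s ^ 2 ≤ (|t| + 1) ^ 2 := by rw [← sq_abs]; gcongr
  gcongr

theorem stmt_5_general (a β : ℕ → ℝ) (α M : ℝ) (f : ℕ → ℝ → ℝ)
    (ha : ∀ n, α ≤ a n ∧ a n ≤ M)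
    (hC1 : ∀ n, ContDiff ℝ 1 (f n)) (hconv : ∀ n, ConvexOn ℝ Set.univ (f n))
    (hgrowth : ∀ n t, |f n t| ≤ β n * (1 + t ^ 2)) (hβ : InS β)
    (x : ℕ → ℝ) (hx : InS x) :
    (∃ C : ℝ, ∀ n : ℕ, |a n * x n + deriv (f n) (x n)| ≤ C) ∧
    (∃ k : ℕ, ∃ C : ℝ, ∀ n : ℕ,
      |a n * x n + deriv (f n) (x n)| * (((n : ℝ) + 1) ^ k)⁻¹ ≤ C) := by
  obtain ⟨X, hX⟩ := hx.exists_abs_le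
  obtain ⟨B, hB⟩ := hβ.exists_abs_le
  set A := max |α| |M|
  have hbound : ∀ n, |a n * x n + deriv (f n) (x n)| ≤ A * X + 2 * (B * (1 + (X + 1) ^ 2)) := by
    intro n
    have hβn : 0 ≤ β n := by simpa using (abs_nonneg (f n 0)).trans (hgrowth n 0)
    have hβB : β n ≤ B := (le_abs_self _).trans (hB n)
    have hB₀ : 0 ≤ B := hβn.trans hβB
    have hX₀ : 0 ≤ X := (abs_nonneg _).trans (hX 0)
    have han : |a n| ≤ A := abs_le_max_abs_abs (ha n).1 (ha n).2
    have hxX := hX n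
    have hderiv := (hconv n).abs_deriv_le_of_abs_le_mul_one_add_sq
      ((hC1 n).differentiable one_ne_zero) (hgrowth n) (x n)
    calc |a n * x n + deriv (f n) (x n)|
        ≤ |a n| * |x n| + 2 * (β n * (1 + (|x n| + 1) ^ 2)) := by
          rw [← abs_mul]; linarith [abs_add_le (a n * x n) (deriv (f n) (x n))]
      _ ≤ A * X + 2 * (B * (1 + (X + 1) ^ 2)) := by gcongr
  exact ⟨⟨_, hbound⟩, 0, _, fun n => by simpa using hbound n⟩

/-- for `x ∈ s` and `g_n(x) := a_n x_n + f_n'(x_n)`, the sequence `(g_n(x))`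
is bounded; in particular it is a tempered sequence, i.e. it belongs to
`t = ⋃_k { y | sup_n |y_n| n^{-k} < ∞ }`. -/
theorem stmt_5 (a β : ℕ → ℝ) (α M : ℝ) (f : ℕ → ℝ → ℝ)
    (hα : 0 < α) (ha : ∀ n, α ≤ a n ∧ a n ≤ M)
    (hC1 : ∀ n, ContDiff ℝ 1 (f n)) (hconv : ∀ n, ConvexOn ℝ Set.univ (f n))
    (hgrowth : ∀ n t, |f n t| ≤ β n * (1 + t ^ 2)) (hβ : InS β)
    (x : ℕ → ℝ) (hx : InS x) :
    (∃ C : ℝ, ∀ n : ℕ, |a n * x n + deriv (f n) (x n)| ≤ C) ∧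
    (∃ k : ℕ, ∃ C : ℝ, ∀ n : ℕ,
      |a n * x n + deriv (f n) (x n)| * (((n : ℝ) + 1) ^ k)⁻¹ ≤ C) :=
  stmt_5_general a β α M f ha hC1 hconv hgrowth hβ x hx
end

section
/- Let (a_n)_{n≥1} satisfy 0 < α ≤ a_n ≤ M; for each n let f_n : ℝ → ℝ be C¹ and convex with |f_n(t)| ≤ β_n(1+t²), (β_n) ∈ s, and f_n(t) ≥ −γ_n with γ_n ≥ 0, Σ γ_n < ∞, and let F(x) = (1/2) Σ a_n x_n² + Σ f_n(x_n) on s. Let (x^{(j)})_{j∈ℕ} be a sequence in s such that (F(x^{(j)}))_j is bounded and such that, setting g_n^{(j)} := a_n x_n^{(j)} + f_n'(x_n^{(j)}), for every k ∈ ℕ the weighted sums Σ_{n=1}^∞ (g_n^{(j)})² n^{2k} are bounded uniformly in j. Then (x^{(j)}) is bounded in s: for every k ∈ ℕ, sup_j ‖x^{(j)}‖_k = sup_j sup_n |x_n^{(j)}| n^k < ∞. -/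
/-- The `𝓕ₛ`-functional `F(x) = (1/2) Σ a_n x_n² + Σ f_n(x_n)`. -/
noncomputable def Ffun (a : ℕ → ℝ) (f : ℕ → ℝ → ℝ) (x : ℕ → ℝ) : ℝ :=
  (1 / 2) * ∑' n : ℕ, a n * x n ^ 2 + ∑' n : ℕ, f n (x n)

/-!
Since `F` is bounded along the sequence and every `f_n` is bounded below by `-γ_n` with
`Σ γ_n < ∞`, each term `α (x_n⁽ʲ⁾)²` is bounded by `2 (sup_j |F(x⁽ʲ⁾)| + Σ γ_n)`, so the
`x⁽ʲ⁾` are bounded in `ℓ^∞` uniformly in `j`. Convexity and the quadratic growth bound give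
`|f_n'(t)| ≤ 5 β_n (1 + t²)`, hence `|f_n'(x_n⁽ʲ⁾)| n^k` is bounded by a multiple of
`sup_n β_n n^k`, uniformly in `j`. The hypothesis on `g⁽ʲ⁾` bounds `|g_n⁽ʲ⁾| n^k`, and
`α |x_n| ≤ |a_n x_n + f_n'(x_n)| + |f_n'(x_n)|` finishes the proof.
-/

open Set

lemma summable_one_div_succ_sq : Summable (fun n : ℕ => 1 / ((n : ℝ) + 1) ^ 2) := by
  have h := (summable_nat_add_iff 1).2 (Real.summable_one_div_nat_pow.2 one_lt_two)
  exact h.congr fun n => by push_cast; ring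

namespace InS

variable {x y : ℕ → ℝ}

lemma exists_sq_le (hx : InS x) : ∃ C, ∀ n, x n ^ 2 ≤ C := by
  obtain ⟨C, hC⟩ := hx 0
  refine ⟨C ^ 2, fun n => ?_⟩
  have hxC : |x n| ≤ C := by simpa using hC n
  exact sq_le_sq' (abs_le.1 hxC).1 (abs_le.1 hxC).2

lemma summable_sq_mul_pow (hx : InS x) (k : ℕ) :
    Summable (fun n => x n ^ 2 * ((n : ℝ) + 1) ^ (2 * k)) := by
  obtain ⟨C, hC⟩ := hx (k + 1)
  refine Summable.of_nonneg_of_le (fun n => by positivity) (fun n => ?_)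
    (summable_one_div_succ_sq.mul_left (C ^ 2))
  have hw : (0 : ℝ) < ((n : ℝ) + 1) ^ 2 := by positivity
  rw [mul_one_div, le_div_iff₀ hw]
  calc x n ^ 2 * ((n : ℝ) + 1) ^ (2 * k) * ((n : ℝ) + 1) ^ 2
      = (|x n| * ((n : ℝ) + 1) ^ (k + 1)) ^ 2 := by rw [mul_pow, sq_abs]; ring
    _ ≤ C ^ 2 := pow_le_pow_left₀ (by positivity) (hC n) 2

lemma summable_sq (hx : InS x) : Summable (fun n => x n ^ 2) := by
  simpa using hx.summable_sq_mul_pow 0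

lemma summable (hx : InS x) : Summable x := by
  obtain ⟨C, hC⟩ := hx 2
  refine Summable.of_norm_bounded (summable_one_div_succ_sq.mul_left C) fun n => ?_
  rw [Real.norm_eq_abs, mul_one_div, le_div_iff₀ (by positivity)]
  exact hC n

lemma of_abs_le_mul (hx : InS x) (c : ℝ) (h : ∀ n, |y n| ≤ c * |x n|) : InS y := by
  intro k
  obtain ⟨C, hC⟩ := hx k
  refine ⟨|c| * C, fun n => ?_⟩
  calc |y n| * ((n : ℝ) + 1) ^ k ≤ |c| * |x n| * ((n : ℝ) + 1) ^ k := by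
        gcongr; exact (h n).trans (mul_le_mul_of_nonneg_right (le_abs_self c) (abs_nonneg _))
    _ = |c| * (|x n| * ((n : ℝ) + 1) ^ k) := by ring
    _ ≤ |c| * C := by gcongr; exact hC n

lemma add (hx : InS x) (hy : InS y) : InS (fun n => x n + y n) := by
  intro k
  obtain ⟨C, hC⟩ := hx k
  obtain ⟨D, hD⟩ := hy k
  refine ⟨C + D, fun n => ?_⟩
  calc |x n + y n| * ((n : ℝ) + 1) ^ k ≤ (|x n| + |y n|) * ((n : ℝ) + 1) ^ k := by
        gcongr; exact abs_add_le _ _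
    _ = |x n| * ((n : ℝ) + 1) ^ k + |y n| * ((n : ℝ) + 1) ^ k := add_mul _ _ _
    _ ≤ C + D := add_le_add (hC n) (hD n)

lemma mul_left_of_abs_le {a : ℕ → ℝ} {M : ℝ} (hx : InS x) (ha : ∀ n, |a n| ≤ M) :
    InS (fun n => a n * x n) :=
  hx.of_abs_le_mul M fun n => by
    rw [abs_mul]; exact mul_le_mul_of_nonneg_right (ha n) (abs_nonneg _)

lemma summable_mul_sq {a : ℕ → ℝ} {M : ℝ} (hx : InS x) (ha : ∀ n, |a n| ≤ M) :
    Summable (fun n => a n * x n ^ 2) := by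
  refine Summable.of_norm_bounded (hx.summable_sq.mul_left M) fun n => ?_
  rw [Real.norm_eq_abs, abs_mul, abs_sq]
  exact mul_le_mul_of_nonneg_right (ha n) (sq_nonneg _)

end InS

lemma nonneg_of_abs_le_mul_one_add_sq {f : ℝ → ℝ} {b : ℝ}
    (hb : ∀ t, |f t| ≤ b * (1 + t ^ 2)) : 0 ≤ b := by
  simpa using (abs_nonneg _).trans (hb 0)

/-- The derivative is squeezed between the slopes over `[x - 1, x]` and `[x, x + 1]`. Where `f`
is not differentiable, `deriv f x = 0` and the bound holds trivially. -/
lemma ConvexOn.abs_deriv_le_s9 {f : ℝ → ℝ} {b : ℝ} (hf : ConvexOn ℝ univ f)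
    (hb : ∀ t, |f t| ≤ b * (1 + t ^ 2)) (x : ℝ) :
    |deriv f x| ≤ 5 * b * (1 + x ^ 2) := by
  have hb0 := nonneg_of_abs_le_mul_one_add_sq hb
  by_cases hd : DifferentiableAt ℝ f x
  swap
  · rw [deriv_zero_of_not_differentiableAt hd, abs_zero]; positivity
  have hright : deriv f x ≤ f (x + 1) - f x := by
    simpa [slope_def_field] using
      hf.deriv_le_slope (mem_univ x) (mem_univ (x + 1)) (by linarith) hd
  have hleft : f x - f (x - 1) ≤ deriv f x := by
    simpa [slope_def_field] using
      hf.slope_le_deriv (mem_univ (x - 1)) (mem_univ x) (by linarith) hd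
  have b1 := abs_le.1 (hb (x + 1))
  have b2 := abs_le.1 (hb x)
  have b3 := abs_le.1 (hb (x - 1))
  rw [abs_le]
  constructor <;> nlinarith [sq_nonneg (x - 1), sq_nonneg (x + 1), sq_nonneg x]

lemma ConvexOn.abs_deriv_mul_le {f : ℝ → ℝ} {b x K w D : ℝ} (hf : ConvexOn ℝ univ f)
    (hb : ∀ t, |f t| ≤ b * (1 + t ^ 2)) (hx : x ^ 2 ≤ K) (hw : 0 ≤ w) (hD : |b| * w ≤ D) :
    |deriv f x| * w ≤ 5 * (1 + K) * D := by
  have hb0 := nonneg_of_abs_le_mul_one_add_sq hb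
  have hK : 0 ≤ 1 + K := by linarith [sq_nonneg x]
  rw [abs_of_nonneg hb0] at hD
  calc |deriv f x| * w ≤ 5 * b * (1 + x ^ 2) * w := by gcongr; exact hf.abs_deriv_le_s9 hb x
    _ ≤ 5 * (1 + K) * (b * w) := by
        have := mul_le_mul_of_nonneg_left hx (mul_nonneg hb0 hw)
        nlinarith
    _ ≤ 5 * (1 + K) * D := by gcongr

section GrowthBound

variable {f : ℕ → ℝ → ℝ} {β x : ℕ → ℝ}

lemma InS.summable_comp (hx : InS x) (hgrowth : ∀ n t, |f n t| ≤ β n * (1 + t ^ 2))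
    (hβ : InS β) : Summable (fun n => f n (x n)) := by
  obtain ⟨C, hC⟩ := hx.exists_sq_le
  refine Summable.of_norm_bounded (hβ.summable.mul_right (1 + C)) fun n => ?_
  calc ‖f n (x n)‖ ≤ β n * (1 + x n ^ 2) := hgrowth n (x n)
    _ ≤ β n * (1 + C) := by
        gcongr
        exacts [nonneg_of_abs_le_mul_one_add_sq (hgrowth n), hC n]

lemma InS.deriv_comp (hx : InS x) (hconv : ∀ n, ConvexOn ℝ univ (f n))
    (hgrowth : ∀ n t, |f n t| ≤ β n * (1 + t ^ 2)) (hβ : InS β) :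
    InS (fun n => deriv (f n) (x n)) := by
  obtain ⟨C, hC⟩ := hx.exists_sq_le
  refine hβ.of_abs_le_mul (5 * (1 + C)) fun n => ?_
  simpa using (hconv n).abs_deriv_mul_le (hgrowth n) (hC n) zero_le_one le_rfl

end GrowthBound

lemma mul_sq_le_two_mul_Ffun_add {a γ x : ℕ → ℝ} {f : ℕ → ℝ → ℝ} (ha : ∀ n, 0 ≤ a n)
    (hax : Summable fun n => a n * x n ^ 2) (hfx : Summable fun n => f n (x n))
    (hγ : Summable γ) (hlb : ∀ n t, -γ n ≤ f n t) (n : ℕ) :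
    a n * x n ^ 2 ≤ 2 * (Ffun a f x + ∑' m, γ m) := by
  have hterm : a n * x n ^ 2 ≤ ∑' m, a m * x m ^ 2 :=
    hax.le_tsum n fun m _ => mul_nonneg (ha m) (sq_nonneg _)
  have hf : -∑' m, γ m ≤ ∑' m, f m (x m) := by
    rw [← tsum_neg]
    exact hγ.neg.tsum_le_tsum (fun m => hlb m _) hfx
  unfold Ffun
  linarith

lemma abs_mul_pow_le_sqrt_of_tsum_le {y : ℕ → ℝ} {k : ℕ} {B : ℝ}
    (hy : Summable fun n => y n ^ 2 * ((n : ℝ) + 1) ^ (2 * k))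
    (hB : ∑' n, y n ^ 2 * ((n : ℝ) + 1) ^ (2 * k) ≤ B) (n : ℕ) :
    |y n| * ((n : ℝ) + 1) ^ k ≤ √B := by
  refine Real.le_sqrt_of_sq_le ?_
  calc (|y n| * ((n : ℝ) + 1) ^ k) ^ 2 = y n ^ 2 * ((n : ℝ) + 1) ^ (2 * k) := by
        rw [mul_pow, sq_abs, ← pow_mul, mul_comm k]
    _ ≤ B := (hy.le_tsum n fun m _ => by positivity).trans hB

lemma mul_abs_le_abs_mul_add_add_abs {α a x d : ℝ} (h : α ≤ a) :
    α * |x| ≤ |a * x + d| + |d| :=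
  calc α * |x| ≤ a * |x| := mul_le_mul_of_nonneg_right h (abs_nonneg x)
    _ ≤ |a * x| :=
        (mul_le_mul_of_nonneg_right (le_abs_self a) (abs_nonneg x)).trans_eq (abs_mul a x).symm
    _ ≤ |a * x + d| + |d| := by simpa using abs_add_le (a * x + d) (-d)

theorem stmt_9_general (a β γ : ℕ → ℝ) (α M : ℝ) (f : ℕ → ℝ → ℝ)
    (hα : 0 < α) (ha : ∀ n, α ≤ a n ∧ a n ≤ M)
    (hconv : ∀ n, ConvexOn ℝ Set.univ (f n))
    (hgrowth : ∀ n t, |f n t| ≤ β n * (1 + t ^ 2)) (hβ : InS β)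
    (hγ : Summable γ) (hlb : ∀ n t, -γ n ≤ f n t)
    (xj : ℕ → ℕ → ℝ) (hxj : ∀ j, InS (xj j))
    (hFbdd : ∃ B : ℝ, ∀ j, |Ffun a f (xj j)| ≤ B)
    (hgbdd : ∀ k : ℕ, ∃ B : ℝ, ∀ j : ℕ,
      ∑' n : ℕ, (a n * xj j n + deriv (f n) (xj j n)) ^ 2 * ((n : ℝ) + 1) ^ (2 * k) ≤ B) :
    ∀ k : ℕ, ∃ B : ℝ, ∀ j n : ℕ, |xj j n| * ((n : ℝ) + 1) ^ k ≤ B := by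
  have ha0 n : 0 ≤ a n := hα.le.trans (ha n).1
  have haM n : |a n| ≤ M := (abs_of_nonneg (ha0 n)).trans_le (ha n).2
  obtain ⟨B, hB⟩ := hFbdd
  set K := 2 * (B + ∑' m, γ m) / α
  have hK j n : xj j n ^ 2 ≤ K := by
    rw [le_div_iff₀ hα]
    have := mul_sq_le_two_mul_Ffun_add ha0 ((hxj j).summable_mul_sq haM)
      ((hxj j).summable_comp hgrowth hβ) hγ hlb n
    have := mul_le_mul_of_nonneg_right (ha n).1 (sq_nonneg (xj j n))
    linarith [le_abs_self (Ffun a f (xj j)), hB j]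
  intro k
  obtain ⟨Bk, hBk⟩ := hgbdd k
  obtain ⟨Dk, hDk⟩ := hβ k
  refine ⟨(√Bk + 5 * (1 + K) * Dk) / α, fun j n => ?_⟩
  have hg : |a n * xj j n + deriv (f n) (xj j n)| * ((n : ℝ) + 1) ^ k ≤ √Bk :=
    abs_mul_pow_le_sqrt_of_tsum_le (((hxj j).mul_left_of_abs_le haM).add
      ((hxj j).deriv_comp hconv hgrowth hβ) |>.summable_sq_mul_pow k) (hBk j) n
  have hd : |deriv (f n) (xj j n)| * ((n : ℝ) + 1) ^ k ≤ 5 * (1 + K) * Dk :=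
    (hconv n).abs_deriv_mul_le (hgrowth n) (hK j n) (by positivity) (hDk n)
  rw [le_div_iff₀ hα]
  calc |xj j n| * ((n : ℝ) + 1) ^ k * α = α * |xj j n| * ((n : ℝ) + 1) ^ k := by ring
    _ ≤ (|a n * xj j n + deriv (f n) (xj j n)| + |deriv (f n) (xj j n)|)
          * ((n : ℝ) + 1) ^ k := by
        gcongr; exact mul_abs_le_abs_mul_add_add_abs (ha n).1
    _ ≤ √Bk + 5 * (1 + K) * Dk := by rw [add_mul]; exact add_le_add hg hd

/-- under the `𝓕ₛ` conditions, if `(x⁽ʲ⁾) ⊆ s` has `(F(x⁽ʲ⁾))` bounded and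
the weighted sums `Σ (g_n⁽ʲ⁾)² n^{2k}` (with `g_n⁽ʲ⁾ = a_n x_n⁽ʲ⁾ + f_n'(x_n⁽ʲ⁾)`) are
bounded uniformly in `j` for each `k`, then `(x⁽ʲ⁾)` is bounded in `s`: for every `k`,
`sup_j sup_n |x_n⁽ʲ⁾| n^k < ∞`. -/
theorem stmt_9 (a β γ : ℕ → ℝ) (α M : ℝ) (f : ℕ → ℝ → ℝ)
    (hα : 0 < α) (ha : ∀ n, α ≤ a n ∧ a n ≤ M)
    (hC1 : ∀ n, ContDiff ℝ 1 (f n)) (hconv : ∀ n, ConvexOn ℝ Set.univ (f n))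
    (hgrowth : ∀ n t, |f n t| ≤ β n * (1 + t ^ 2)) (hβ : InS β)
    (hγ0 : ∀ n, 0 ≤ γ n) (hγ : Summable γ) (hlb : ∀ n t, -γ n ≤ f n t)
    (xj : ℕ → ℕ → ℝ) (hxj : ∀ j, InS (xj j))
    (hFbdd : ∃ B : ℝ, ∀ j, |Ffun a f (xj j)| ≤ B)
    (hgbdd : ∀ k : ℕ, ∃ B : ℝ, ∀ j : ℕ,
      ∑' n : ℕ, (a n * xj j n + deriv (f n) (xj j n)) ^ 2 * ((n : ℝ) + 1) ^ (2 * k) ≤ B) :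
    ∀ k : ℕ, ∃ B : ℝ, ∀ j n : ℕ, |xj j n| * ((n : ℝ) + 1) ^ k ≤ B :=
  stmt_9_general a β γ α M f hα ha hconv hgrowth hβ hγ hlb xj hxj hFbdd hgbdd
end

section
/- Let (c_n)_{n≥1} ∈ s. Then for each n ≥ 1 the equation x + (1/n²)·tanh(x) = c_n/n² has a unique real solution x_n*, and the resulting sequence (x_n*)_{n≥1} belongs to s. -/
/-! The map `t ↦ t + a tanh t` (`a ≥ 0`) is a continuous strictly increasing bijection of `ℝ`
moving every point by less than `a`, so each equation `t + a tanh t = b` has exactly one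
solution, and it lies in `[b - a, b + a]`. As `t` and `tanh t` have the same sign, the solution
also satisfies `|t| ≤ |b|`; with `a = 1/n²`, `b = c_n/n²` this gives `|x_n*| ≤ |c_n|`, so the
seminorms of `(x_n*)` are bounded by those of `(c_n)`. -/

namespace Real

theorem tanh_strictMono : StrictMono tanh := by
  intro t u htu
  rw [tanh_eq_sinh_div_cosh, tanh_eq_sinh_div_cosh,
    div_lt_div_iff₀ (cosh_pos t) (cosh_pos u)]
  have h : sinh (t - u) < 0 := sinh_neg_iff.mpr (sub_neg.mpr htu)
  rw [sinh_sub] at h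
  linarith

theorem continuous_tanh : Continuous tanh := by
  simp_rw [funext tanh_eq_sinh_div_cosh]
  exact continuous_sinh.div continuous_cosh fun t => (cosh_pos t).ne'

theorem mul_tanh_nonneg (t : ℝ) : 0 ≤ t * tanh t := by
  rcases le_total 0 t with ht | ht
  · exact mul_nonneg ht (tanh_zero ▸ tanh_strictMono.monotone ht)
  · exact mul_nonneg_of_nonpos_of_nonpos ht (tanh_zero ▸ tanh_strictMono.monotone ht)

theorem existsUnique_add_mul_tanh_eq {a : ℝ} (ha : 0 ≤ a) (b : ℝ) :
    ∃! t : ℝ, t + a * tanh t = b := by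
  set g : ℝ → ℝ := fun t => t + a * tanh t
  have hmono : StrictMono g := strictMono_id.add_monotone (tanh_strictMono.monotone.const_mul ha)
  have hcont : Continuous g := continuous_id.add (continuous_const.mul continuous_tanh)
  have hlow : g (b - a) ≤ b := by
    have := tanh_lt_one (b - a)
    simp only [g]
    nlinarith
  have hhigh : b ≤ g (b + a) := by
    have := neg_one_lt_tanh (b + a)
    simp only [g]
    nlinarith
  obtain ⟨t, -, ht⟩ := intermediate_value_Icc (by linarith) hcont.continuousOn ⟨hlow, hhigh⟩
  exact ⟨t, ht, fun y hy => hmono.injective (hy.trans ht.symm)⟩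

theorem abs_le_abs_add_mul_tanh {a : ℝ} (ha : 0 ≤ a) (t : ℝ) : |t| ≤ |t + a * tanh t| := by
  apply sq_le_sq.mp
  nlinarith [mul_tanh_nonneg t, sq_nonneg (a * tanh t)]

end Real

theorem InS.of_abs_le {x y : ℕ → ℝ} (hy : InS y) (hxy : ∀ n, |x n| ≤ |y n|) : InS x := by
  intro k
  obtain ⟨C, hC⟩ := hy k
  exact ⟨C, fun n => (mul_le_mul_of_nonneg_right (hxy n) (by positivity)).trans (hC n)⟩

/-- for `(c_n) ∈ s`, for each `n ≥ 1` the equation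
`x + (1/n²) tanh x = c_n/n²` has a unique real solution `x_n*`, and the sequence `(x_n*)`
belongs to `s`. (Here index `n : ℕ` stands for the paper's `n + 1`.) -/
theorem stmt_17 (c : ℕ → ℝ) (hc : InS c) :
    ∃ x : ℕ → ℝ, InS x ∧ ∀ n : ℕ,
      (x n + (1 / ((n : ℝ) + 1) ^ 2) * Real.tanh (x n) = c n / ((n : ℝ) + 1) ^ 2) ∧
      (∀ y : ℝ, y + (1 / ((n : ℝ) + 1) ^ 2) * Real.tanh y = c n / ((n : ℝ) + 1) ^ 2 →
        y = x n) := by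
  have hweight (n : ℕ) : (0 : ℝ) ≤ 1 / ((n : ℝ) + 1) ^ 2 := by positivity
  choose x hx hx_unique using fun n => Real.existsUnique_add_mul_tanh_eq (hweight n)
    (c n / ((n : ℝ) + 1) ^ 2)
  refine ⟨x, hc.of_abs_le fun n => ?_, fun n => ⟨hx n, hx_unique n⟩⟩
  have hsq : (1 : ℝ) ≤ ((n : ℝ) + 1) ^ 2 := one_le_pow₀ (by linarith [n.cast_nonneg (α := ℝ)])
  calc |x n| ≤ |c n / ((n : ℝ) + 1) ^ 2| := hx n ▸ Real.abs_le_abs_add_mul_tanh (hweight n) _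
    _ ≤ |c n| := by
      rw [abs_div, abs_of_pos (zero_lt_one.trans_le hsq)]
      exact div_le_self (abs_nonneg _) hsq
end
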